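/- Let Γ be a tetravalent G-half-arc-transitive graph for some G ≤ Aut(Γ) with att_G(Γ) < 2·rad_G(Γ). Then K_G(Γ_B) = K_G(Alt_G(Γ)) = K_G(A), i.e. the kernel of the action of G on the quotient graph Γ_B, the kernel of the action of G on the graph Alt_G(Γ) of G-alternating cycles, and the kernel of the action of G on the set A of all G-attachment sets all coincide. -/

import Mathlib

/-! Common definitions for tetravalent half-arc-transitive graph theory. -/

open SimpleGraph Set

namespace HalfArc

variable {V W : Type*}

/-- A subgroup of automorphisms acts transitively on the vertices. -/
def IsVertexTrans (Γ : SimpleGraph V) (G : Subgroup (Γ ≃g Γ)) : Prop :=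
  ∀ u v : V, ∃ g ∈ G, g u = v

/-- A subgroup of automorphisms acts transitively on the edges. -/
def IsEdgeTrans (Γ : SimpleGraph V) (G : Subgroup (Γ ≃g Γ)) : Prop :=
  ∀ ⦃u v u' v' : V⦄, Γ.Adj u v → Γ.Adj u' v' →
    ∃ g ∈ G, (g u = u' ∧ g v = v') ∨ (g u = v' ∧ g v = u')

/-- A subgroup of automorphisms acts transitively on the arcs (ordered pairs of
adjacent vertices). -/
def IsArcTrans (Γ : SimpleGraph V) (G : Subgroup (Γ ≃g Γ)) : Prop :=
  ∀ ⦃u v u' v' : V⦄, Γ.Adj u v → Γ.Adj u' v' → ∃ g ∈ G, g u = u' ∧ g v = v'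

/-- Half-arc-transitive: vertex- and edge- but not arc-transitive. -/
def IsHalfArcTrans (Γ : SimpleGraph V) (G : Subgroup (Γ ≃g Γ)) : Prop :=
  IsVertexTrans Γ G ∧ IsEdgeTrans Γ G ∧ ¬ IsArcTrans Γ G

/-- An alternating cycle of length `n` in a graph `Γ` whose edges carry an
orientation `O`: a cyclic sequence of pairwise distinct vertices in which
consecutive vertices are adjacent and any two consecutive edges have opposite
orientations. -/
structure AltCycle (Γ : SimpleGraph V) (O : V → V → Prop) (n : ℕ) where
  f : ZMod n → V
  inj : Function.Injective f
  adj : ∀ i, Γ.Adj (f i) (f (i + 1))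
  alt : ∀ i, O (f i) (f (i + 1)) ↔ O (f (i + 2)) (f (i + 1))

/-- The vertex set of an alternating cycle. -/
def cycVerts {Γ : SimpleGraph V} {O : V → V → Prop} {n : ℕ} (c : AltCycle Γ O n) : Set V :=
  Set.range c.f

/-- The edge set of an alternating cycle. -/
def cycEdges {Γ : SimpleGraph V} {O : V → V → Prop} {n : ℕ} (c : AltCycle Γ O n) :
    Set (Sym2 V) :=
  Set.range fun i => s(c.f i, c.f (i + 1))

/-- The sets of edges of alternating cycles (an alternating cycle, as a subgraph,
is determined by its edge set). -/
def IsAltEdgeSet (Γ : SimpleGraph V) (O : V → V → Prop) (n : ℕ) (E : Set (Sym2 V)) : Prop :=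
  ∃ c : AltCycle Γ O n, cycEdges c = E

/-- The vertex sets of alternating cycles. -/
def IsAltVertSet (Γ : SimpleGraph V) (O : V → V → Prop) (n : ℕ) (A : Set V) : Prop :=
  ∃ c : AltCycle Γ O n, cycVerts c = A

/-- The set of vertices covered by a set of edges. -/
def suppOf (E : Set (Sym2 V)) : Set V := {v | ∃ e ∈ E, v ∈ e}

/-- The graph of alternating cycles: its vertices are the alternating cycles
(represented by their edge sets), two of them adjacent whenever they share a vertex. -/
def altGraph (Γ : SimpleGraph V) (O : V → V → Prop) (n : ℕ) :
    SimpleGraph {E : Set (Sym2 V) // IsAltEdgeSet Γ O n E} where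
  Adj X Y := X ≠ Y ∧ (suppOf X.1 ∩ suppOf Y.1).Nonempty
  symm := by
    constructor
    rintro X Y ⟨hne, x, hx1, hx2⟩
    exact ⟨hne.symm, x, hx2, hx1⟩
  loopless := by constructor; rintro X ⟨hne, -⟩; exact hne rfl

/-- The attachment sets: nonempty intersections of (the vertex sets of) two distinct
alternating cycles. -/
def IsAttSet (Γ : SimpleGraph V) (O : V → V → Prop) (n : ℕ) (A : Set V) : Prop :=
  ∃ c c' : AltCycle Γ O n, cycEdges c ≠ cycEdges c' ∧ (cycVerts c ∩ cycVerts c').Nonempty ∧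
    A = cycVerts c ∩ cycVerts c'

/-- `attachmentIs Γ O n a` : any two distinct alternating cycles with nonempty
intersection meet in exactly `a` vertices. -/
def attachmentIs (Γ : SimpleGraph V) (O : V → V → Prop) (n a : ℕ) : Prop :=
  ∀ A : Set V, IsAttSet Γ O n A → A.ncard = a

/-- A `k`-step rotation of an alternating cycle (in one of the two directions). -/
def IsRot {Γ : SimpleGraph V} {O : V → V → Prop} {n : ℕ} (c : AltCycle Γ O n)
    (g : V → V) (k : ℕ) : Prop :=
  (∀ i, g (c.f i) = c.f (i + k)) ∨ (∀ i, g (c.f i) = c.f (i - k))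

/-- The setup of the paper: a finite connected tetravalent graph `Γ`, a subgroup `G`
of its automorphism group acting half-arc-transitively, one of the two `G`-induced
orientations `O` of the edges of `Γ` (an orbit of `G` on arcs), the `G`-radius `r`
(half the common length of all `G`-alternating cycles) and the `G`-attachment
number `att`, together with the basic structural facts relating them. -/
structure Setup (V : Type*) where
  Γ : SimpleGraph V
  finite : Finite V
  conn : Γ.Connected
  tetra : ∀ v : V, (Γ.neighborSet v).ncard = 4
  G : Subgroup (Γ ≃g Γ)
  hat : IsHalfArcTrans Γ G
  O : V → V → Prop
  O_adj : ∀ ⦃u v⦄, O u v → Γ.Adj u v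
  O_choice : ∀ ⦃u v⦄, Γ.Adj u v → (O u v ↔ ¬ O v u)
  O_inv : ∀ g ∈ G, ∀ ⦃u v⦄, O u v → O (g u) (g v)
  O_orbit : ∀ ⦃u v u' v'⦄, O u v → O u' v' → ∃ g ∈ G, g u = u' ∧ g v = v'
  r : ℕ
  r_pos : 0 < r
  /-- every vertex lies on exactly two `G`-alternating cycles, each of length `2 * r` -/
  alt_cover : ∀ v : V, {E : Set (Sym2 V) | IsAltEdgeSet Γ O (2 * r) E ∧ v ∈ suppOf E}.ncard = 2
  att : ℕ
  att_pos : 0 < att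
  /-- any two non-disjoint `G`-alternating cycles meet in exactly `att` vertices -/
  att_eq : attachmentIs Γ O (2 * r) att
  att_dvd : att ∣ 2 * r

namespace Setup

variable {V : Type*} (S : Setup V)

/-- The kernel of the action of `G` on the set of `G`-alternating cycles:
the elements of `G` fixing every `G`-alternating cycle setwise. -/
def altKernel : Subgroup (S.Γ ≃g S.Γ) where
  carrier := {g | g ∈ S.G ∧ ∀ E : Set (Sym2 V),
    IsAltEdgeSet S.Γ S.O (2 * S.r) E → Sym2.map (g : V → V) '' E = E}
  one_mem' := by
    refine ⟨S.G.one_mem, fun E _ => ?_⟩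
    have : Sym2.map ((1 : S.Γ ≃g S.Γ) : V → V) = id := by
      funext e
      have : ((1 : S.Γ ≃g S.Γ) : V → V) = id := rfl
      rw [this, Sym2.map_id, id]
    rw [this, Set.image_id]
  mul_mem' := by
    rintro g h ⟨hg, hg'⟩ ⟨hh, hh'⟩
    refine ⟨S.G.mul_mem hg hh, fun E hE => ?_⟩
    have hcomp : Sym2.map ((g * h : S.Γ ≃g S.Γ) : V → V)
        = Sym2.map (g : V → V) ∘ Sym2.map (h : V → V) := by
      funext e
      have : ((g * h : S.Γ ≃g S.Γ) : V → V) = (g : V → V) ∘ (h : V → V) := rfl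
      rw [this, Function.comp_apply, ← Sym2.map_map]
    rw [hcomp, Set.image_comp, hh' E hE, hg' E hE]
  inv_mem' := by
    rintro g ⟨hg, hg'⟩
    refine ⟨S.G.inv_mem hg, fun E hE => ?_⟩
    conv_lhs => rw [← hg' E hE]
    rw [← Set.image_comp]
    have : Sym2.map ((g⁻¹ : S.Γ ≃g S.Γ) : V → V) ∘ Sym2.map (g : V → V) = id := by
      funext e
      rw [Function.comp_apply, Sym2.map_map]
      have h1 : ((g⁻¹ : S.Γ ≃g S.Γ) : V → V) ∘ (g : V → V) = id := by
        funext v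
        exact g.toEquiv.symm_apply_apply v
      rw [h1, Sym2.map_id]
    rw [this, Set.image_id]

/-- The kernel of the action of `G` on a collection of sets of vertices. -/
def kernelOn (P : Set V → Prop) : Subgroup (S.Γ ≃g S.Γ) where
  carrier := {g | g ∈ S.G ∧ ∀ A : Set V, P A → (g : V → V) '' A = A}
  one_mem' := ⟨S.G.one_mem, fun A _ => by
    have : ((1 : S.Γ ≃g S.Γ) : V → V) = id := rfl
    rw [this, Set.image_id]⟩
  mul_mem' := by
    rintro g h ⟨hg, hg'⟩ ⟨hh, hh'⟩
    refine ⟨S.G.mul_mem hg hh, fun A hA => ?_⟩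
    have : ((g * h : S.Γ ≃g S.Γ) : V → V) = (g : V → V) ∘ (h : V → V) := rfl
    rw [this, Set.image_comp, hh' A hA, hg' A hA]
  inv_mem' := by
    rintro g ⟨hg, hg'⟩
    refine ⟨S.G.inv_mem hg, fun A hA => ?_⟩
    conv_lhs => rw [← hg' A hA]
    rw [← Set.image_comp]
    have : ((g⁻¹ : S.Γ ≃g S.Γ) : V → V) ∘ (g : V → V) = id := by
      funext v; exact g.toEquiv.symm_apply_apply v
    rw [this, Set.image_id]

/-- The kernel of the action of `G` on the set of all `G`-attachment sets. -/
def attKernel : Subgroup (S.Γ ≃g S.Γ) :=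
  S.kernelOn (IsAttSet S.Γ S.O (2 * S.r))

/-- The block `B_s(C; u_i) = {u_{i+2sj} : 0 ≤ j < att}` of Construction 5.3. -/
def blockSet (s : ℕ) (c : AltCycle S.Γ S.O (2 * S.r)) (i : ZMod (2 * S.r)) : Set V :=
  {v | ∃ j : ℕ, j < S.att ∧ v = c.f (i + (2 * s * j : ℕ))}

/-- The imprimitivity block system `B` of Construction 5.3. -/
def Blocks (s : ℕ) : Set (Set V) :=
  {A | ∃ (c : AltCycle S.Γ S.O (2 * S.r)) (i : ZMod (2 * S.r)), A = S.blockSet s c i}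

/-- The quotient graph `Γ_B` of `Γ` with respect to the block system `B`. -/
def quotGraph (s : ℕ) : SimpleGraph {A : Set V // A ∈ S.Blocks s} where
  Adj X Y := X ≠ Y ∧ ∃ u ∈ X.1, ∃ v ∈ Y.1, S.Γ.Adj u v
  symm := by
    constructor
    rintro X Y ⟨hne, u, hu, v, hv, ha⟩
    exact ⟨hne.symm, v, hv, u, hu, ha.symm⟩
  loopless := by constructor; rintro X ⟨hne, -⟩; exact hne rfl

/-- The kernel of the action of `G` on the quotient graph `Γ_B`. -/
def quotKernel (s : ℕ) : Subgroup (S.Γ ≃g S.Γ) :=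
  S.kernelOn (· ∈ S.Blocks s)

/-- The orientation of the edges of the quotient graph `Γ_B` induced by `O`. -/
def quotO (s : ℕ) (X Y : {A : Set V // A ∈ S.Blocks s}) : Prop :=
  ∃ u ∈ X.1, ∃ v ∈ Y.1, S.O u v

end Setup

/-- The data defining the parameters `q_t` and `q_h` of Section 3: a vertex `v`,
the two `G`-alternating cycles `c` and `c'` through `v` (with `v = u_0 = v_0` and
`v` the tail of the two arcs of `c` incident to it), and the minimality properties
defining `q_t` and `q_h`.  Here `ell = 2r/att`. -/
structure JumpData {V : Type*} (S : Setup V) where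
  v : V
  c : AltCycle S.Γ S.O (2 * S.r)
  c' : AltCycle S.Γ S.O (2 * S.r)
  ell : ℕ
  hell : S.att * ell = 2 * S.r
  hc : c.f 0 = v
  hc' : c'.f 0 = v
  hne : cycEdges c ≠ cycEdges c'
  htail₁ : S.O v (c.f 1)
  htail₂ : S.O v (c.f (-1))
  qt : ℕ
  qh : ℕ
  hqt : c'.f ((qt * ell : ℕ)) = c.f ((ell : ℕ)) ∨
    c'.f ((qt * ell : ℕ)) = c.f (-(ell : ZMod (2 * S.r)))
  hqt_min : ∀ m : ℕ, m < qt → ¬(c'.f ((m * ell : ℕ)) = c.f ((ell : ℕ)) ∨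
    c'.f ((m * ell : ℕ)) = c.f (-(ell : ZMod (2 * S.r))))
  hqh : c.f ((qh * ell : ℕ)) = c'.f ((ell : ℕ)) ∨
    c.f ((qh * ell : ℕ)) = c'.f (-(ell : ZMod (2 * S.r)))
  hqh_min : ∀ m : ℕ, m < qh → ¬(c.f ((m * ell : ℕ)) = c'.f ((ell : ℕ)) ∨
    c.f ((m * ell : ℕ)) = c'.f (-(ell : ZMod (2 * S.r))))

/-- The `G`-alternating jump `jum_G(Γ) = min {q_t, q_h}`. -/
def JumpData.jump {V : Type*} {S : Setup V} (J : JumpData S) : ℕ := min J.qt J.qh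

end HalfArc


open HalfArc

/-!
An element of the kernel on `G`-alternating cycles fixes every alternating cycle `C` setwise,
so it acts on `C` as a rotation or a reflection. It also fixes every attachment set on `C`;
for a rotation by `t` this forces `att • t = 0` in `ZMod (2r)`, that is `ℓ ∣ t`, and since `G`
preserves the orientation `t` is even, so `2s = lcm 2 ℓ` divides `t` and each block
`B_s(C; u)` is preserved. A reflection is only possible when `ℓ ≤ 2`, where `s = 1` and the
blocks are the parity classes of `C`, again preserved by a reflection coming from `G`.
Conversely, an element of `G` fixing all blocks, or all attachment sets, maps the vertex set
of every alternating cycle into itself; if it moved a cycle, the image would meet the cycle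
in `2r > att` vertices.
-/

namespace HalfArc

section AddInvariant

variable {A : Type*} [AddCommGroup A] {Q : Set A} {u : A}

/-- Translating by `u` permutes `Q`, so `∑ Q = ∑ Q + |Q| • u`. -/
theorem ncard_nsmul_eq_zero_of_mapsTo_add (hQ : Q.Finite) (h : Set.MapsTo (· + u) Q Q) :
    Q.ncard • u = 0 := by
  classical
  have himg : (· + u) '' Q = Q :=
    ((hQ.injOn_iff_bijOn_of_mapsTo h).1 (add_left_injective u).injOn).image_eq
  have hsum := Finset.sum_image (f := id) (s := hQ.toFinset) (add_left_injective u).injOn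
  have hF : hQ.toFinset.image (· + u) = hQ.toFinset :=
    Finset.coe_injective (by rw [Finset.coe_image, Set.Finite.coe_toFinset, himg])
  rw [hF] at hsum
  simp only [id, Finset.sum_add_distrib, Finset.sum_const] at hsum
  rw [Set.ncard_eq_toFinset_card Q hQ]
  simpa using hsum

theorem exists_eq_add_nsmul_of_mapsTo_add (hQ : Q.Finite) (h : Set.MapsTo (· + u) Q Q)
    (hcard : Q.ncard ≤ addOrderOf u) {x y : A} (hx : x ∈ Q) (hy : y ∈ Q) :
    ∃ k : ℕ, y = x + k • u := by
  set T := (fun k : ℕ => x + k • u) '' Set.Iio (addOrderOf u)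
  have hTQ : T ⊆ Q := by
    rintro _ ⟨k, -, rfl⟩
    induction k with
    | zero => simpa using hx
    | succ k ih => simpa [succ_nsmul, add_assoc] using h ih
  have hTcard : T.ncard = addOrderOf u := by
    have hinj : Set.InjOn (fun k : ℕ => x + k • u) (Set.Iio (addOrderOf u)) :=
      fun a ha b hb hab => nsmul_injOn_Iio_addOrderOf ha hb (add_left_cancel hab)
    rw [hinj.ncard_image]
    simp
  obtain ⟨k, -, rfl⟩ := Set.eq_of_subset_of_ncard_le hTQ (hTcard ▸ hcard) hQ ▸ hy
  exact ⟨k, rfl⟩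

end AddInvariant

theorem zmod_induction_from {n : ℕ} [NeZero n] {P : ZMod n → Prop} (a : ZMod n) (ha : P a)
    (hsucc : ∀ j, P j → P (j + 1)) (j : ZMod n) : P j := by
  obtain ⟨k, rfl⟩ : ∃ k : ℕ, j = a + k := ⟨(j - a).val, by simp⟩
  induction k with
  | zero => simpa using ha
  | succ k ih => simpa [add_assoc] using hsucc _ ih

theorem dvd_of_nsmul_natCast_eq_zero {n a l k : ℕ} (hn : a * l = n) (ha : 0 < a)
    (h : a • (k : ZMod n) = 0) : l ∣ k := by
  subst hn
  rw [nsmul_eq_mul, ← Nat.cast_mul, ZMod.natCast_eq_zero_iff] at h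
  exact (Nat.mul_dvd_mul_iff_left ha).1 h

theorem two_mul_ite_eq_lcm (l : ℕ) : 2 * (if Even l then l / 2 else l) = Nat.lcm 2 l := by
  split_ifs with hl
  · rw [Nat.two_mul_div_two_of_even hl, Nat.lcm_eq_right (even_iff_two_dvd.1 hl)]
  · rw [Nat.Coprime.lcm_eq_mul (Nat.coprime_two_left.2 (Nat.not_even_iff_odd.1 hl))]

section AltCycle

variable {V : Type*} {Γ : SimpleGraph V} {O : V → V → Prop} {n : ℕ}

theorem suppOf_image_map (g : V → V) (E : Set (Sym2 V)) :
    suppOf (Sym2.map g '' E) = g '' suppOf E := by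
  ext v
  constructor
  · rintro ⟨_, ⟨e, he, rfl⟩, hv⟩
    obtain ⟨w, hw, rfl⟩ := Sym2.mem_map.1 hv
    exact ⟨w, ⟨e, he, hw⟩, rfl⟩
  · rintro ⟨w, ⟨e, he, hw⟩, rfl⟩
    exact ⟨Sym2.map g e, ⟨e, he, rfl⟩, Sym2.mem_map.2 ⟨w, hw, rfl⟩⟩

theorem cycVerts_eq_suppOf (c : AltCycle Γ O n) : cycVerts c = suppOf (cycEdges c) := by
  ext v
  constructor
  · rintro ⟨i, rfl⟩
    exact ⟨_, ⟨i, rfl⟩, Sym2.mem_mk_left _ _⟩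
  · rintro ⟨_, ⟨i, rfl⟩, hv⟩
    rcases Sym2.mem_iff.1 hv with rfl | rfl
    exacts [⟨i, rfl⟩, ⟨i + 1, rfl⟩]

theorem image_cycVerts_of_image_cycEdges (c : AltCycle Γ O n) {g : V → V}
    (h : Sym2.map g '' cycEdges c = cycEdges c) : g '' cycVerts c = cycVerts c := by
  rw [cycVerts_eq_suppOf, ← suppOf_image_map, h]

def cycNbrs (c : AltCycle Γ O n) (i : ZMod n) : Set V := {c.f (i - 1), c.f (i + 1)}

theorem mk_mem_cycEdges_iff (c : AltCycle Γ O n) (i : ZMod n) (w : V) :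
    s(c.f i, w) ∈ cycEdges c ↔ w ∈ cycNbrs c i := by
  constructor
  · rintro ⟨j, hj⟩
    rcases Sym2.eq_iff.1 hj with ⟨hji, rfl⟩ | ⟨rfl, hji⟩
    · rw [c.inj hji]
      exact Or.inr rfl
    · obtain rfl : j = i - 1 := by rw [← c.inj hji]; ring
      exact Or.inl rfl
  · rintro (rfl | rfl)
    exacts [⟨i - 1, by dsimp only; rw [sub_add_cancel, Sym2.eq_swap]⟩, ⟨i, rfl⟩]

theorem isAltEdgeSet_two_singleton {u v : V} (h : Γ.Adj u v) :
    IsAltEdgeSet Γ O 2 {s(u, v)} := by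
  refine ⟨⟨![u, v], ?_, ?_, ?_⟩, ?_⟩
  · intro i j hij
    fin_cases i <;> fin_cases j <;> first | rfl | simp_all [h.ne, h.ne.symm]
  · intro i
    fin_cases i
    exacts [h, h.symm]
  · intro i
    rw [show i + 2 = i by fin_cases i <;> rfl]
  · ext e
    constructor
    · rintro ⟨i, rfl⟩
      fin_cases i
      exacts [rfl, Sym2.eq_swap]
    · rintro rfl
      exact ⟨0, rfl⟩

theorem exists_rotation_or_reflection [NeZero n] (c : AltCycle Γ O n) {g : V → V}
    (hg : Function.Injective g) (h2 : (2 : ZMod n) ≠ 0)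
    (hfix : Sym2.map g '' cycEdges c = cycEdges c) :
    ∃ t, (∀ i, g (c.f i) = c.f (i + t)) ∨ (∀ i, g (c.f i) = c.f (t - i)) := by
  have hverts := image_cycVerts_of_image_cycEdges c hfix
  have hpos : ∀ i, ∃ j, g (c.f i) = c.f j := fun i => by
    obtain ⟨j, hj⟩ : g (c.f i) ∈ cycVerts c := hverts ▸ Set.mem_image_of_mem g ⟨i, rfl⟩
    exact ⟨j, hj.symm⟩
  choose π hπ using hpos
  have hπinj : Function.Injective π := fun i j hij =>
    c.inj (hg (by rw [hπ, hπ, hij]))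
  have hstep : ∀ i, π (i + 1) - π i = 1 ∨ π (i + 1) - π i = -1 := by
    intro i
    have hmem : s(c.f (π i), c.f (π (i + 1))) ∈ cycEdges c := by
      rw [← hπ, ← hπ, ← hfix]
      exact ⟨_, ⟨i, rfl⟩, rfl⟩
    rcases (mk_mem_cycEdges_iff c _ _).1 hmem with h | h
    · right; rw [c.inj h]; ring
    · left; rw [c.inj h]; ring
  -- consecutive steps agree, since a reversal would give `π (j + 2) = π j`
  have hconst : ∀ j, π (j + 1) - π j = π 1 - π 0 := by
    refine zmod_induction_from 0 (by simp) fun j hj => ?_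
    have hne : π (j + 1 + 1) ≠ π j := fun h => h2 (by linear_combination hπinj h)
    rcases hstep j with h | h <;> rcases hstep (j + 1) with h' | h'
    · linear_combination h' - h + hj
    · exact absurd (by linear_combination h' + h) hne
    · exact absurd (by linear_combination h' + h) hne
    · linear_combination h' - h + hj
  have hlin : ∀ j, π j = π 0 + j * (π 1 - π 0) :=
    zmod_induction_from 0 (by simp) fun j hj => by linear_combination hconst j + hj
  refine ⟨π 0, ?_⟩
  rcases hstep 0 with h | h <;> rw [zero_add] at h
  · exact Or.inl fun i => by rw [hπ, hlin, h]; ring_nf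
  · exact Or.inr fun i => by rw [hπ, hlin, h]; ring_nf

end AltCycle

namespace Setup

variable {V : Type*} (S : Setup V)

instance neZero_two_mul_r : NeZero (2 * S.r) := ⟨by have := S.r_pos; omega⟩

theorem O_apply_iff {g : S.Γ ≃g S.Γ} (hg : g ∈ S.G) {u v : V} (h : S.Γ.Adj u v) :
    S.O (g u) (g v) ↔ S.O u v :=
  ⟨fun hO => by_contra fun hn =>
    (S.O_choice (g.map_adj_iff.2 h)).1 hO (S.O_inv g hg ((S.O_choice h.symm).2 hn)),
    fun hO => S.O_inv g hg hO⟩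

def mapCycle {g : S.Γ ≃g S.Γ} (hg : g ∈ S.G) {n : ℕ} (c : AltCycle S.Γ S.O n) :
    AltCycle S.Γ S.O n where
  f i := g (c.f i)
  inj := g.injective.comp c.inj
  adj i := g.map_adj_iff.2 (c.adj i)
  alt i := by
    have h : S.Γ.Adj (c.f (i + 2)) (c.f (i + 1)) := by
      simpa [add_assoc, one_add_one_eq_two] using (c.adj (i + 1)).symm
    rw [S.O_apply_iff hg (c.adj i), S.O_apply_iff hg h]
    exact c.alt i

variable {S} in
theorem cycVerts_mapCycle {g : S.Γ ≃g S.Γ} (hg : g ∈ S.G) {n : ℕ}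
    (c : AltCycle S.Γ S.O n) :
    cycVerts (S.mapCycle hg c) = g '' cycVerts c :=
  Set.range_comp g c.f

variable {S} in
theorem cycEdges_mapCycle {g : S.Γ ≃g S.Γ} (hg : g ∈ S.G) {n : ℕ}
    (c : AltCycle S.Γ S.O n) :
    cycEdges (S.mapCycle hg c) = Sym2.map g '' cycEdges c := by
  rw [cycEdges, cycEdges, ← Set.range_comp]
  rfl

/-- If `r = 1`, each of the four edges at a vertex would be an alternating cycle through it. -/
theorem one_lt_r : 1 < S.r := by
  have := S.finite
  by_contra hr
  have hr1 : S.r = 1 := by have := S.r_pos; omega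
  obtain ⟨v⟩ := S.conn.nonempty
  have hle := Set.ncard_le_ncard_of_injOn (s := S.Γ.neighborSet v)
    (t := {E | IsAltEdgeSet S.Γ S.O (2 * S.r) E ∧ v ∈ suppOf E})
    (fun u => ({s(v, u)} : Set (Sym2 V)))
    (fun u hu =>
      ⟨by rw [hr1]; exact isAltEdgeSet_two_singleton hu, _, rfl, Sym2.mem_mk_left _ _⟩)
    (fun u hu w _ huw => by simpa [(S.Γ.ne_of_adj hu).symm] using huw)
  rw [S.tetra v, S.alt_cover v] at hle
  omega

theorem two_ne_zero_zmod : (2 : ZMod (2 * S.r)) ≠ 0 := by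
  intro h
  have h2 : ((2 : ℕ) : ZMod (2 * S.r)) = 0 := by exact_mod_cast h
  have := Nat.le_of_dvd two_pos ((ZMod.natCast_eq_zero_iff _ _).1 h2)
  have := S.one_lt_r
  omega

section Orientation

variable {n : ℕ}

theorem O_succ_iff (c : AltCycle S.Γ S.O n) (i : ZMod n) :
    S.O (c.f (i + 1)) (c.f (i + 1 + 1)) ↔ ¬ S.O (c.f i) (c.f (i + 1)) := by
  rw [c.alt i, ← one_add_one_eq_two, ← add_assoc]
  exact S.O_choice (c.adj (i + 1))

theorem O_pred_iff (c : AltCycle S.Γ S.O n) (i : ZMod n) :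
    S.O (c.f i) (c.f (i - 1)) ↔ S.O (c.f i) (c.f (i + 1)) := by
  have h := c.alt (i - 1)
  rw [sub_add_cancel, ← one_add_one_eq_two, ← add_assoc, sub_add_cancel] at h
  have had : S.Γ.Adj (c.f (i - 1)) (c.f i) := by simpa using c.adj (i - 1)
  rw [S.O_choice had.symm, S.O_choice (c.adj i), h]

theorem O_iff_castHom_eq_zero [NeZero n] (h2 : 2 ∣ n) (c : AltCycle S.Γ S.O n) (i : ZMod n) :
    S.O (c.f i) (c.f (i + 1)) ↔ (S.O (c.f 0) (c.f 1) ↔ ZMod.castHom h2 (ZMod 2) i = 0) := by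
  have hZ2 : ∀ x : ZMod 2, x + 1 = 0 ↔ ¬ x = 0 := by decide
  revert i
  refine zmod_induction_from 0 (by simp) fun j (hj : S.O (c.f j) (c.f (j + 1)) ↔ _) => ?_
  rw [S.O_succ_iff, hj, map_add, map_one, hZ2]
  tauto

end Orientation

theorem castHom_eq_zero_iff_two_dvd_val (t : ZMod (2 * S.r)) :
    ZMod.castHom (dvd_mul_right 2 S.r) (ZMod 2) t = 0 ↔ 2 ∣ t.val := by
  rw [ZMod.castHom_apply, ← ZMod.natCast_val, ZMod.natCast_eq_zero_iff]

theorem two_dvd_val_of_rotation {g : S.Γ ≃g S.Γ} (hg : g ∈ S.G)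
    (c : AltCycle S.Γ S.O (2 * S.r)) {t : ZMod (2 * S.r)} (ht : ∀ i, g (c.f i) = c.f (i + t)) :
    2 ∣ t.val := by
  have h := S.O_apply_iff hg (c.adj 0)
  rw [ht, ht, zero_add, zero_add, add_comm 1 t,
    S.O_iff_castHom_eq_zero (dvd_mul_right 2 S.r)] at h
  rw [← castHom_eq_zero_iff_two_dvd_val]
  tauto

theorem two_dvd_val_of_reflection {g : S.Γ ≃g S.Γ} (hg : g ∈ S.G)
    (c : AltCycle S.Γ S.O (2 * S.r)) {t : ZMod (2 * S.r)} (ht : ∀ i, g (c.f i) = c.f (t - i)) :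
    2 ∣ t.val := by
  have h := S.O_apply_iff hg (c.adj 0)
  have hpar := S.O_iff_castHom_eq_zero (dvd_mul_right 2 S.r) c (t - 1)
  have had : S.Γ.Adj (c.f (t - 1)) (c.f t) := by simpa using c.adj (t - 1)
  rw [sub_add_cancel] at hpar
  rw [ht, ht, sub_zero, zero_add, S.O_choice had.symm, hpar, map_sub, map_one] at h
  rw [← castHom_eq_zero_iff_two_dvd_val]
  have hZ2 : ∀ x : ZMod 2, x - 1 ≠ 0 → x = 0 := by decide
  exact hZ2 _ fun h0 => by simp only [h0] at h; tauto

def outNbrs (v : V) : Set V := {w | S.O v w}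

def inNbrs (v : V) : Set V := {w | S.O w v}

theorem ncard_outNbrs_add_ncard_inNbrs (v : V) :
    (S.outNbrs v).ncard + (S.inNbrs v).ncard = 4 := by
  have := S.finite
  have hdisj : Disjoint (S.outNbrs v) (S.inNbrs v) :=
    Set.disjoint_left.2 fun w hout hin => (S.O_choice (S.O_adj hout)).1 hout hin
  have hunion : S.outNbrs v ∪ S.inNbrs v = S.Γ.neighborSet v := by
    ext w
    simp only [outNbrs, inNbrs, Set.mem_union, Set.mem_ofPred_eq, mem_neighborSet]
    exact ⟨fun h => h.elim (S.O_adj ·) fun h => (S.O_adj h).symm,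
      fun h => (em (S.O v w)).imp_right (S.O_choice h.symm).2⟩
  rw [← Set.ncard_union_eq hdisj, hunion, S.tetra]

theorem ncard_setOf_le_of_invariant (R : V → V → Prop)
    (hR : ∀ g ∈ S.G, ∀ ⦃u w⦄, R u w → R (g u) (g w)) (v v' : V) :
    {w | R v w}.ncard ≤ {w | R v' w}.ncard := by
  have := S.finite
  obtain ⟨g, hg, rfl⟩ := S.hat.1 v v'
  exact Set.ncard_le_ncard_of_injOn g (fun w hw => hR g hg hw) g.injective.injOn

theorem nonempty_altCycle : Nonempty (AltCycle S.Γ S.O (2 * S.r)) := by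
  obtain ⟨v⟩ := S.conn.nonempty
  obtain ⟨_, ⟨c, -⟩, -⟩ := Set.nonempty_of_ncard_ne_zero
    (s := {E | IsAltEdgeSet S.Γ S.O (2 * S.r) E ∧ v ∈ suppOf E}) (by rw [S.alt_cover]; omega)
  exact ⟨c⟩

theorem ncard_cycNbrs (c : AltCycle S.Γ S.O (2 * S.r)) (i : ZMod (2 * S.r)) :
    (cycNbrs c i).ncard = 2 :=
  Set.ncard_pair fun h => S.two_ne_zero_zmod (by linear_combination -c.inj h)

theorem cycNbrs_subset_outNbrs {n : ℕ} (c : AltCycle S.Γ S.O n) {i : ZMod n}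
    (h : S.O (c.f i) (c.f (i + 1))) : cycNbrs c i ⊆ S.outNbrs (c.f i) := by
  rintro w (rfl | rfl)
  exacts [(S.O_pred_iff c i).2 h, h]

theorem cycNbrs_subset_inNbrs {n : ℕ} (c : AltCycle S.Γ S.O n) {i : ZMod n}
    (h : ¬ S.O (c.f i) (c.f (i + 1))) : cycNbrs c i ⊆ S.inNbrs (c.f i) := by
  have had : S.Γ.Adj (c.f (i - 1)) (c.f i) := by simpa using c.adj (i - 1)
  rintro w (rfl | rfl)
  exacts [(S.O_choice had).2 (mt (S.O_pred_iff c i).1 h), (S.O_choice (c.adj i).symm).2 h]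

/-- Every vertex has two out-neighbours and two in-neighbours: by vertex-transitivity these
numbers are constant, an alternating cycle exhibits a vertex with two out-neighbours and one
with two in-neighbours, and they add up to `4`. -/
theorem ncard_outNbrs_eq_two_and_ncard_inNbrs_eq_two (v : V) :
    (S.outNbrs v).ncard = 2 ∧ (S.inNbrs v).ncard = 2 := by
  have := S.finite
  obtain ⟨c⟩ := S.nonempty_altCycle
  obtain ⟨i, hi⟩ : ∃ i, S.O (c.f i) (c.f (i + 1)) := by
    by_cases h : S.O (c.f 0) (c.f (0 + 1))
    exacts [⟨0, h⟩, ⟨0 + 1, (S.O_succ_iff c 0).2 h⟩]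
  obtain ⟨j, hj⟩ : ∃ j, ¬ S.O (c.f j) (c.f (j + 1)) := by
    by_cases h : S.O (c.f 0) (c.f (0 + 1))
    exacts [⟨0 + 1, fun h' => (S.O_succ_iff c 0).1 h' h⟩, ⟨0, h⟩]
  have hout : 2 ≤ (S.outNbrs v).ncard :=
    calc 2 = (cycNbrs c i).ncard := (S.ncard_cycNbrs c i).symm
      _ ≤ (S.outNbrs (c.f i)).ncard := Set.ncard_le_ncard (S.cycNbrs_subset_outNbrs c hi)
      _ ≤ (S.outNbrs v).ncard := S.ncard_setOf_le_of_invariant _ S.O_inv _ _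
  have hin : 2 ≤ (S.inNbrs v).ncard :=
    calc 2 = (cycNbrs c j).ncard := (S.ncard_cycNbrs c j).symm
      _ ≤ (S.inNbrs (c.f j)).ncard := Set.ncard_le_ncard (S.cycNbrs_subset_inNbrs c hj)
      _ ≤ (S.inNbrs v).ncard :=
        S.ncard_setOf_le_of_invariant (fun a b => S.O b a) (fun g hg _ _ h => S.O_inv g hg h) _ _
  have := S.ncard_outNbrs_add_ncard_inNbrs v
  omega

theorem cycNbrs_eq_outNbrs_or_inNbrs (c : AltCycle S.Γ S.O (2 * S.r)) (i : ZMod (2 * S.r)) :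
    cycNbrs c i = S.outNbrs (c.f i) ∨ cycNbrs c i = S.inNbrs (c.f i) := by
  have := S.finite
  obtain ⟨hout, hin⟩ := S.ncard_outNbrs_eq_two_and_ncard_inNbrs_eq_two (c.f i)
  by_cases h : S.O (c.f i) (c.f (i + 1))
  · exact Or.inl (Set.eq_of_subset_of_ncard_le (S.cycNbrs_subset_outNbrs c h)
      (by rw [hout, S.ncard_cycNbrs]))
  · exact Or.inr (Set.eq_of_subset_of_ncard_le (S.cycNbrs_subset_inNbrs c h)
      (by rw [hin, S.ncard_cycNbrs]))

theorem cycNbrs_eq_of_mem {c c' : AltCycle S.Γ S.O (2 * S.r)} {i m : ZMod (2 * S.r)}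
    (hv : c.f i = c'.f m) {w : V} (hw : w ∈ cycNbrs c i) (hw' : w ∈ cycNbrs c' m) :
    cycNbrs c i = cycNbrs c' m := by
  rcases S.cycNbrs_eq_outNbrs_or_inNbrs c i with h | h <;>
    rcases S.cycNbrs_eq_outNbrs_or_inNbrs c' m with h' | h' <;> rw [h, hv] at hw ⊢ <;>
    rw [h'] at hw' ⊢
  · exact absurd hw' ((S.O_choice (S.O_adj hw)).1 hw)
  · exact absurd hw ((S.O_choice (S.O_adj hw')).1 hw')

theorem cycEdges_subset_of_mem {c c' : AltCycle S.Γ S.O (2 * S.r)} {e : Sym2 V}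
    (he : e ∈ cycEdges c) (he' : e ∈ cycEdges c') : cycEdges c ⊆ cycEdges c' := by
  obtain ⟨i, rfl⟩ := he
  suffices h : ∀ j, s(c.f j, c.f (j + 1)) ∈ cycEdges c' by
    rintro _ ⟨j, rfl⟩
    exact h j
  refine zmod_induction_from i he' fun j hj => ?_
  obtain ⟨m, hm⟩ : c.f (j + 1) ∈ cycVerts c' := by
    rw [cycVerts_eq_suppOf]
    exact ⟨_, hj, Sym2.mem_mk_right _ _⟩
  have hprev : c.f j ∈ cycNbrs c' m := by
    rw [← mk_mem_cycEdges_iff, hm, Sym2.eq_swap]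
    exact hj
  have hnbrs := S.cycNbrs_eq_of_mem hm.symm (Or.inl (by rw [add_sub_cancel_right])) hprev
  rw [← hm, mk_mem_cycEdges_iff, ← hnbrs]
  exact Or.inr rfl

theorem cycEdges_eq_of_mem {c c' : AltCycle S.Γ S.O (2 * S.r)} {e : Sym2 V}
    (he : e ∈ cycEdges c) (he' : e ∈ cycEdges c') : cycEdges c = cycEdges c' :=
  (S.cycEdges_subset_of_mem he he').antisymm (S.cycEdges_subset_of_mem he' he)

theorem exists_rotation_two (c : AltCycle S.Γ S.O (2 * S.r)) :
    ∃ ρ ∈ S.G, ∀ i, ρ (c.f i) = c.f (i + 2) := by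
  have hε : S.O (c.f 2) (c.f 3) ↔ S.O (c.f 0) (c.f 1) := by
    have h0 := S.O_succ_iff c 0
    have h1 := S.O_succ_iff c 1
    norm_num at h0 h1
    tauto
  obtain ⟨ρ, hρG, h0, h1⟩ : ∃ ρ ∈ S.G, ρ (c.f 0) = c.f 2 ∧ ρ (c.f 1) = c.f 3 := by
    by_cases h : S.O (c.f 0) (c.f 1)
    · exact S.O_orbit h (hε.2 h)
    · have h01 : S.Γ.Adj (c.f 0) (c.f 1) := by simpa using c.adj 0
      have h23 : S.Γ.Adj (c.f 2) (c.f 3) := by simpa [two_add_one_eq_three] using c.adj 2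
      obtain ⟨ρ, hρG, h1, h0⟩ :=
        S.O_orbit ((S.O_choice h01.symm).2 h) ((S.O_choice h23.symm).2 (mt hε.1 h))
      exact ⟨ρ, hρG, h0, h1⟩
  have hmem : s(c.f 2, c.f 3) ∈ cycEdges c := ⟨2, by dsimp only; rw [two_add_one_eq_three]⟩
  have hmem' : s(c.f 2, c.f 3) ∈ cycEdges (S.mapCycle hρG c) :=
    ⟨0, by simp [mapCycle, h0, h1]⟩
  have hfix : Sym2.map ρ '' cycEdges c = cycEdges c := by
    rw [← cycEdges_mapCycle hρG]
    exact S.cycEdges_eq_of_mem hmem' hmem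
  obtain ⟨t, ht | ht⟩ := exists_rotation_or_reflection c ρ.injective S.two_ne_zero_zmod hfix
  · have ht2 : 0 + t = 2 := c.inj ((ht 0).symm.trans h0)
    exact ⟨ρ, hρG, fun i => by rw [ht, ← ht2, zero_add]⟩
  · have ht2 := c.inj ((ht 0).symm.trans h0)
    have ht3 := c.inj ((ht 1).symm.trans h1)
    exact absurd (by linear_combination ht2 - ht3) S.two_ne_zero_zmod

theorem ncard_cycVerts (c : AltCycle S.Γ S.O (2 * S.r)) : (cycVerts c).ncard = 2 * S.r := by
  rw [cycVerts, Set.ncard_range_of_injective c.inj, Nat.card_zmod]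

theorem exists_other_cycle (c : AltCycle S.Γ S.O (2 * S.r)) (v : V) :
    ∃ c' : AltCycle S.Γ S.O (2 * S.r), cycEdges c' ≠ cycEdges c ∧ v ∈ cycVerts c' := by
  obtain ⟨_, ⟨⟨c', rfl⟩, hv⟩, hne⟩ := Set.exists_ne_of_one_lt_ncard
    (s := {E | IsAltEdgeSet S.Γ S.O (2 * S.r) E ∧ v ∈ suppOf E})
    (by rw [S.alt_cover v]; omega) (cycEdges c)
  exact ⟨c', hne, by rwa [cycVerts_eq_suppOf]⟩

theorem ncard_preimage_cycVerts {c c' : AltCycle S.Γ S.O (2 * S.r)}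
    (hne : cycEdges c' ≠ cycEdges c) (hmeet : (cycVerts c ∩ cycVerts c').Nonempty) :
    (c.f ⁻¹' cycVerts c').ncard = S.att := by
  rw [← Set.ncard_image_of_injective _ c.inj, Set.image_preimage_eq_range_inter]
  exact S.att_eq _ ⟨c, c', hne.symm, hmeet, rfl⟩

theorem image_cycVerts_of_mem_altKernel {g : S.Γ ≃g S.Γ} (hg : g ∈ S.altKernel)
    (c : AltCycle S.Γ S.O (2 * S.r)) : g '' cycVerts c = cycVerts c :=
  image_cycVerts_of_image_cycEdges c (hg.2 _ ⟨c, rfl⟩)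

theorem mapsTo_preimage_cycVerts {g : S.Γ ≃g S.Γ} (hg : g ∈ S.altKernel)
    {c : AltCycle S.Γ S.O (2 * S.r)} {π : ZMod (2 * S.r) → ZMod (2 * S.r)}
    (hπ : ∀ j, g (c.f j) = c.f (π j)) (c' : AltCycle S.Γ S.O (2 * S.r)) :
    Set.MapsTo π (c.f ⁻¹' cycVerts c') (c.f ⁻¹' cycVerts c') := fun j hj => by
  rw [Set.mem_preimage, ← hπ, ← S.image_cycVerts_of_mem_altKernel hg c']
  exact Set.mem_image_of_mem g hj

theorem lcm_two_dvd_val_of_rotation {l : ℕ} (hl : S.att * l = 2 * S.r) {g : S.Γ ≃g S.Γ}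
    (hg : g ∈ S.altKernel) (c : AltCycle S.Γ S.O (2 * S.r)) {t : ZMod (2 * S.r)}
    (ht : ∀ i, g (c.f i) = c.f (i + t)) : Nat.lcm 2 l ∣ t.val := by
  have := S.finite
  obtain ⟨c', hne, hmem⟩ := S.exists_other_cycle c (c.f 0)
  have hnsmul := ncard_nsmul_eq_zero_of_mapsTo_add (Set.toFinite _)
    (S.mapsTo_preimage_cycVerts hg (π := (· + t)) ht c')
  rw [S.ncard_preimage_cycVerts hne ⟨_, ⟨0, rfl⟩, hmem⟩, ← ZMod.natCast_zmod_val t]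
    at hnsmul
  exact Nat.lcm_dvd (S.two_dvd_val_of_rotation hg.1 c ht)
    (dvd_of_nsmul_natCast_eq_zero hl S.att_pos hnsmul)

/-- The positions on `c` of `c'`, and those of its image under the rotation `ρ` by two steps of
`c`, are both invariant under the reflection `j ↦ t - j`, and composing the two reflections
translates by `4`. -/
theorem mapsTo_add_four_of_reflection {g : S.Γ ≃g S.Γ} (hg : g ∈ S.altKernel)
    {c : AltCycle S.Γ S.O (2 * S.r)} {t : ZMod (2 * S.r)} (ht : ∀ i, g (c.f i) = c.f (t - i))
    (c' : AltCycle S.Γ S.O (2 * S.r)) :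
    Set.MapsTo (· + 4) (c.f ⁻¹' cycVerts c') (c.f ⁻¹' cycVerts c') := by
  obtain ⟨ρ, hρG, hρ⟩ := S.exists_rotation_two c
  have hrefl := S.mapsTo_preimage_cycVerts hg (π := (t - ·)) ht
  have hshift : ∀ j, j + 2 ∈ c.f ⁻¹' cycVerts (S.mapCycle hρG c') ↔
      j ∈ c.f ⁻¹' cycVerts c' := fun j => by
    rw [Set.mem_preimage, cycVerts_mapCycle, ← hρ, ρ.injective.mem_set_image]
    rfl
  intro p hp
  have h1 := hrefl _ ((hshift p).2 hp)
  have h2 : t - p - 4 ∈ c.f ⁻¹' cycVerts c' := by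
    rw [← hshift, show t - p - 4 + 2 = t - (p + 2) by ring]
    exact h1
  have h3 : t - (t - p - 4) ∈ c.f ⁻¹' cycVerts c' := hrefl c' h2
  rwa [show t - (t - p - 4) = p + 4 by ring] at h3

/-- Invariance under the translation by `4` forces `ℓ ∣ 4`; for `ℓ = 4` the positions on `c`
of the other cycles are then the residue classes mod `4`, and a reflection cannot fix both
the class of `0` and that of `1`. -/
theorem le_two_of_reflection {l : ℕ} (hl : S.att * l = 2 * S.r) {g : S.Γ ≃g S.Γ}
    (hg : g ∈ S.altKernel) (c : AltCycle S.Γ S.O (2 * S.r)) {t : ZMod (2 * S.r)}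
    (ht : ∀ i, g (c.f i) = c.f (t - i)) : l ≤ 2 := by
  have := S.finite
  have hrefl := S.mapsTo_preimage_cycVerts hg (π := (t - ·)) ht
  have h4 := S.mapsTo_add_four_of_reflection hg ht
  obtain ⟨c0, hne0, hmem0⟩ := S.exists_other_cycle c (c.f 0)
  obtain ⟨c1, hne1, hmem1⟩ := S.exists_other_cycle c (c.f 1)
  have hcard0 := S.ncard_preimage_cycVerts hne0 ⟨_, ⟨0, rfl⟩, hmem0⟩
  have hcard1 := S.ncard_preimage_cycVerts hne1 ⟨_, ⟨1, rfl⟩, hmem1⟩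
  have hl4 : l ∣ 4 := by
    have h := ncard_nsmul_eq_zero_of_mapsTo_add (Set.toFinite _) (h4 c0)
    rw [hcard0] at h
    exact dvd_of_nsmul_natCast_eq_zero hl S.att_pos (by exact_mod_cast h)
  by_contra hl3
  obtain rfl : l = 4 := by
    have := Nat.le_of_dvd four_pos hl4
    interval_cases l <;> simp_all
  have hord : addOrderOf ((4 : ℕ) : ZMod (2 * S.r)) = S.att := by
    rw [ZMod.addOrderOf_coe _ (NeZero.ne _), ← hl, Nat.gcd_mul_left_left,
      Nat.mul_div_cancel _ four_pos]
  push_cast at hord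
  obtain ⟨k0, hk0⟩ := exists_eq_add_nsmul_of_mapsTo_add (Set.toFinite _) (h4 c0)
    (by rw [hcard0, hord]) hmem0 (by simpa using hrefl c0 hmem0)
  obtain ⟨k1, hk1⟩ := exists_eq_add_nsmul_of_mapsTo_add (Set.toFinite _) (h4 c1)
    (by rw [hcard1, hord]) hmem1 (hrefl c1 hmem1)
  have h4dvd : 4 ∣ 2 * S.r := ⟨S.att, by rw [← hl, mul_comm]⟩
  have e0 := congrArg (ZMod.castHom h4dvd (ZMod 4)) hk0
  have e1 := congrArg (ZMod.castHom h4dvd (ZMod 4)) hk1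
  simp only [map_add, map_sub, map_nsmul, map_zero, map_one, map_ofNat] at e0 e1
  rw [show (4 : ZMod 4) = 0 from rfl, nsmul_zero, add_zero] at e0 e1
  rw [e0] at e1
  exact absurd e1 (by decide)

theorem mem_blockSet {s : ℕ} (hs : 2 * S.r ∣ 2 * s * S.att) (c : AltCycle S.Γ S.O (2 * S.r))
    (i x : ZMod (2 * S.r)) : c.f (i + 2 * s * x) ∈ S.blockSet s c i := by
  refine ⟨x.val % S.att, Nat.mod_lt _ S.att_pos, ?_⟩
  have h0 : ((2 * s * S.att : ℕ) : ZMod (2 * S.r)) = 0 := (ZMod.natCast_eq_zero_iff _ _).2 hs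
  have hx : x = ((x.val % S.att + S.att * (x.val / S.att) : ℕ) : ZMod (2 * S.r)) := by
    rw [Nat.mod_add_div, ZMod.natCast_zmod_val]
  congr 1
  nth_rewrite 1 [hx]
  push_cast at h0 ⊢
  linear_combination ((x.val / S.att : ℕ) : ZMod (2 * S.r)) * h0

theorem image_blockSet_subset_of_mem_altKernel {l s : ℕ} (hl : S.att * l = 2 * S.r)
    (hs : s = if Even l then l / 2 else l) {g : S.Γ ≃g S.Γ} (hg : g ∈ S.altKernel)
    (c : AltCycle S.Γ S.O (2 * S.r)) (i : ZMod (2 * S.r)) :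
    g '' S.blockSet s c i ⊆ S.blockSet s c i := by
  have h2s : 2 * s = Nat.lcm 2 l := hs ▸ two_mul_ite_eq_lcm l
  have hdvd : 2 * S.r ∣ 2 * s * S.att := by
    rw [← hl, h2s, mul_comm S.att]
    exact mul_dvd_mul_right (Nat.dvd_lcm_right 2 l) _
  rintro _ ⟨_, ⟨j, -, rfl⟩, rfl⟩
  obtain ⟨t, ht | ht⟩ :=
    exists_rotation_or_reflection c g.injective S.two_ne_zero_zmod (hg.2 _ ⟨c, rfl⟩)
  · obtain ⟨m, hm⟩ := h2s ▸ S.lcm_two_dvd_val_of_rotation hl hg c ht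
    have e : i + ((2 * s * j : ℕ) : ZMod (2 * S.r)) + t =
        i + 2 * (s : ZMod (2 * S.r)) * ((j + m : ℕ) : ZMod (2 * S.r)) := by
      rw [← ZMod.natCast_zmod_val t, hm]
      push_cast
      ring
    rw [ht, e]
    exact S.mem_blockSet hdvd c i _
  · have hs1 : s = 1 := by
      have := S.le_two_of_reflection hl hg c ht
      have : 0 < l := Nat.pos_of_ne_zero (by rintro rfl; have := S.r_pos; omega)
      interval_cases l <;> simp [hs]
    obtain ⟨w, hw⟩ := S.two_dvd_val_of_reflection hg.1 c ht
    have e : t - (i + ((2 * s * j : ℕ) : ZMod (2 * S.r))) =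
        i + 2 * (s : ZMod (2 * S.r)) * ((w : ZMod (2 * S.r)) - i - (j : ZMod (2 * S.r))) := by
      rw [← ZMod.natCast_zmod_val t, hw, hs1]
      push_cast
      ring
    rw [ht, e]
    exact S.mem_blockSet hdvd c i _

theorem altKernel_le_quotKernel {l s : ℕ} (hl : S.att * l = 2 * S.r)
    (hs : s = if Even l then l / 2 else l) : S.altKernel ≤ S.quotKernel s := by
  have := S.finite
  refine fun g hg => ⟨hg.1, ?_⟩
  rintro _ ⟨c, i, rfl⟩
  exact Set.eq_of_subset_of_ncard_le (S.image_blockSet_subset_of_mem_altKernel hl hs hg c i)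
    (Set.ncard_image_of_injective _ g.injective).ge

theorem altKernel_le_attKernel : S.altKernel ≤ S.attKernel := by
  refine fun g hg => ⟨hg.1, ?_⟩
  rintro _ ⟨c, c', -, -, rfl⟩
  rw [Set.image_inter g.injective, S.image_cycVerts_of_mem_altKernel hg,
    S.image_cycVerts_of_mem_altKernel hg]

/-- If `g` moved the alternating cycle `c` to another one with the same vertex set, these two
cycles would meet in `2r ≠ att` vertices. -/
theorem mem_altKernel_of_image_cycVerts_subset (h : S.att < 2 * S.r) {g : S.Γ ≃g S.Γ}
    (hg : g ∈ S.G) (hsub : ∀ c : AltCycle S.Γ S.O (2 * S.r), g '' cycVerts c ⊆ cycVerts c) :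
    g ∈ S.altKernel := by
  have := S.finite
  refine ⟨hg, ?_⟩
  rintro _ ⟨c, rfl⟩
  have hv : g '' cycVerts c = cycVerts c :=
    Set.eq_of_subset_of_ncard_le (hsub c) (Set.ncard_image_of_injective _ g.injective).ge
  by_contra hne
  have hatt := S.att_eq _ ⟨S.mapCycle hg c, c, by rwa [cycEdges_mapCycle],
    by rw [cycVerts_mapCycle, hv, Set.inter_self]; exact ⟨_, 0, rfl⟩, rfl⟩
  rw [cycVerts_mapCycle, hv, Set.inter_self, S.ncard_cycVerts] at hatt
  omega

theorem attKernel_le_altKernel (h : S.att < 2 * S.r) : S.attKernel ≤ S.altKernel := by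
  refine fun g hg => S.mem_altKernel_of_image_cycVerts_subset h hg.1 fun c => ?_
  rintro _ ⟨_, ⟨i, rfl⟩, rfl⟩
  obtain ⟨c', hne, hmem⟩ := S.exists_other_cycle c (c.f i)
  have hA := hg.2 _ ⟨c, c', hne.symm, ⟨_, ⟨i, rfl⟩, hmem⟩, rfl⟩
  have hi : c.f i ∈ cycVerts c ∩ cycVerts c' := ⟨⟨i, rfl⟩, hmem⟩
  exact (hA ▸ Set.mem_image_of_mem g hi).1

theorem quotKernel_le_altKernel (h : S.att < 2 * S.r) (s : ℕ) :
    S.quotKernel s ≤ S.altKernel := by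
  refine fun g hg => S.mem_altKernel_of_image_cycVerts_subset h hg.1 fun c => ?_
  rintro _ ⟨_, ⟨i, rfl⟩, rfl⟩
  have hB := hg.2 _ ⟨c, i, rfl⟩
  obtain ⟨j, -, hj⟩ : g (c.f i) ∈ S.blockSet s c i :=
    hB ▸ Set.mem_image_of_mem g ⟨0, S.att_pos, by simp⟩
  exact ⟨_, hj.symm⟩

end Setup

end HalfArc

/-- Theorem 5.4 of the paper: if `att_G(Γ) < 2·rad_G(Γ)` then the
kernels of the actions of `G` on the quotient graph `Γ_B`, on the graph of
`G`-alternating cycles, and on the set of all `G`-attachment sets coincide. -/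
theorem statement_10 {V : Type*} (S : Setup V) (h : S.att < 2 * S.r) (l s : ℕ)
    (hl : S.att * l = 2 * S.r) (hs : s = if Even l then l / 2 else l) :
    S.quotKernel s = S.altKernel ∧ S.altKernel = S.attKernel :=
  ⟨le_antisymm (S.quotKernel_le_altKernel h s) (S.altKernel_le_quotKernel hl hs),
    le_antisymm S.altKernel_le_attKernel (S.attKernel_le_altKernel h)⟩
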